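/- arXiv:2203.10265 — 2 statements merged into one kernel-verified Lean document; each statement's English description precedes it below -/
import Mathlib

section
/- Let X be a Banach space on which the numerical radius is a norm on L(X). Then every extreme point of the closed unit ball of (L(X)_w)* lies in the weak* closure of the set A = { x* ⊗ x : x* ∈ B_{X*}, x ∈ B_X, |x*(x)| = ‖x*‖‖x‖ }. -/
variable {𝕜 : Type*} [RCLike 𝕜] {X : Type*} [NormedAddCommGroup X] [NormedSpace 𝕜 X]

/-- The numerical radius of a bounded linear operator on a Banach space. -/
noncomputable def nrad (T : X →L[𝕜] X) : ℝ :=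
  sSup {r : ℝ | ∃ (x : X) (f : X →L[𝕜] 𝕜), ‖x‖ = 1 ∧ ‖f‖ = 1 ∧ f x = 1 ∧ r = ‖f (T x)‖}

/-- The functional `x* ⊗ x : T ↦ x*(Tx)` on `L(X)`. -/
noncomputable def tensor (f : X →L[𝕜] 𝕜) (x : X) : (X →L[𝕜] X) →L[𝕜] 𝕜 :=
  f.comp (ContinuousLinearMap.apply 𝕜 X x)

/-- The dual norm induced on functionals by the numerical radius norm. -/
noncomputable def wdual (g : (X →L[𝕜] X) →L[𝕜] 𝕜) : ℝ :=
  sSup {r : ℝ | ∃ T : X →L[𝕜] X, nrad T ≤ 1 ∧ r = ‖g T‖}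

/-!
Since `nrad` is equivalent to the operator norm, `wdual` is finite and, under `toWeakDual`, its
unit ball is the polar `K` of `{T | nrad T ≤ 1}`, which is weak* compact by Banach–Alaoglu. Each
`x* ⊗ x` in `A` lies in `K`, because a norming pair `(x*, x)` rescales to a state. Conversely `K`
lies in the weak* closed convex hull of `A`: a weak* continuous functional separating a point of `K`
from that hull is evaluation at an operator `S`, and testing it against the rotated states in `A`
bounds `nrad S`. Milman's converse to the Krein–Milman theorem then puts the extreme points of `K`
into the weak* closure of `A`.
-/

open Set Filter Topology Pointwise

section Milman

variable {E : Type*} [AddCommGroup E] [Module ℝ E] [TopologicalSpace E] [IsTopologicalAddGroup E]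

theorem exists_convex_nhds_zero_sub_notMem_add [LocallyConvexSpace ℝ E] {D : Set E}
    (hD : IsClosed D) {x : E} (hx : x ∉ D) :
    ∃ V ∈ 𝓝 (0 : E), Convex ℝ V ∧ ∀ y ∈ D, x - y ∉ V + V := by
  have hN : (x - ·) ⁻¹' Dᶜ ∈ 𝓝 (0 : E) :=
    (continuous_const.sub continuous_id).continuousAt.preimage_mem_nhds
      (hD.isOpen_compl.mem_nhds (by simpa using hx))
  obtain ⟨N, hN0, hNN⟩ := exists_nhds_zero_half hN
  obtain ⟨V, ⟨hV0, hVconv⟩, hVN⟩ := (LocallyConvexSpace.convex_basis_zero ℝ E).mem_iff.1 hN0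
  refine ⟨V, hV0, hVconv, fun y hy ⟨v, hv, w, hw, hvw⟩ => hNN v (hVN hv) w (hVN hw) ?_⟩
  simpa [hvw] using hy

variable [ContinuousSMul ℝ E]

theorem IsCompact.convexJoin {s t : Set E} (hs : IsCompact s) (ht : IsCompact t) :
    IsCompact (_root_.convexJoin ℝ s t) := by
  have : _root_.convexJoin ℝ s t =
      (fun p : (E × E) × ℝ => (1 - p.2) • p.1.1 + p.2 • p.1.2) '' ((s ×ˢ t) ×ˢ Icc 0 1) := by
    ext z
    simp only [mem_convexJoin, segment_eq_image ℝ, mem_image, mem_prod, Prod.exists]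
    aesop
  rw [this]
  exact ((hs.prod ht).prod isCompact_Icc).image (by fun_prop)

theorem IsCompact.convexHull_union {s t : Set E} (hs : IsCompact s) (hs' : Convex ℝ s)
    (ht : IsCompact (convexHull ℝ t)) : IsCompact (convexHull ℝ (s ∪ t)) := by
  rcases s.eq_empty_or_nonempty with rfl | hs₀
  · simpa using ht
  rcases t.eq_empty_or_nonempty with rfl | ht₀
  · simpa [hs'.convexHull_eq] using hs
  rw [_root_.convexHull_union hs₀ ht₀, hs'.convexHull_eq]
  exact hs.convexJoin ht

theorem isCompact_convexHull_biUnion {ι : Type*} (t : Finset ι) {C : ι → Set E}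
    (hC : ∀ i ∈ t, IsCompact (C i)) (hC' : ∀ i ∈ t, Convex ℝ (C i)) :
    IsCompact (convexHull ℝ (⋃ i ∈ t, C i)) := by
  classical
  induction t using Finset.induction_on with
  | empty => simp
  | insert a t _ ih =>
    rw [Finset.set_biUnion_insert]
    simp only [Finset.mem_insert, forall_eq_or_imp] at hC hC'
    exact hC.1.convexHull_union hC'.1 (ih hC.2 hC'.2)

/-- Milman's theorem. Cover `closure A` by finitely many translates `y + V` of a small convex
neighbourhood `V` of `0`; the closed convex hulls of the pieces `closure A ∩ (y + V)` have a compact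
convex hull containing `K`, so an extreme point of `K` lies in one of them, hence near `A`. -/
theorem mem_closure_of_mem_extremePoints [LocallyConvexSpace ℝ E] [T2Space E] {A K : Set E}
    (hK : IsCompact K) (hKconv : Convex ℝ K) (hAK : A ⊆ K) (hKA : K ⊆ closure (convexHull ℝ A))
    {x : E} (hx : x ∈ K.extremePoints ℝ) : x ∈ closure A := by
  by_contra hxA
  have hDK : closure A ⊆ K := closure_minimal hAK hK.isClosed
  have hD : IsCompact (closure A) := hK.of_isClosed_subset isClosed_closure hDK
  obtain ⟨V, hV0, hVconv, hxV⟩ := exists_convex_nhds_zero_sub_notMem_add isClosed_closure hxA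
  obtain ⟨t, htD, hDt⟩ :=
    hD.elim_nhds_subcover (fun y => y +ᵥ V) fun y _ => vadd_mem_nhds_self.2 hV0
  set C : E → Set E := fun y => closure (convexHull ℝ (closure A ∩ (y +ᵥ V)))
  have hCK : ∀ y, C y ⊆ K := fun y =>
    closure_minimal (convexHull_min (inter_subset_left.trans hDK) hKconv) hK.isClosed
  have hKC : K ⊆ convexHull ℝ (⋃ y ∈ t, C y) := by
    refine hKA.trans (closure_minimal (convexHull_min (subset_closure.trans fun z hz => ?_)
      (convex_convexHull ℝ _)) (isCompact_convexHull_biUnion t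
        (fun y _ => hK.of_isClosed_subset isClosed_closure (hCK y))
        (fun y _ => (convex_convexHull ℝ _).closure)).isClosed)
    obtain ⟨y, hy, hzy⟩ := mem_iUnion₂.1 (hDt hz)
    exact subset_convexHull ℝ _
      (mem_iUnion₂.2 ⟨y, hy, subset_closure (subset_convexHull ℝ _ ⟨hz, hzy⟩)⟩)
  have hxC : x ∈ ⋃ y ∈ t, C y := extremePoints_convexHull_subset <|
    inter_extremePoints_subset_extremePoints_of_subset
      (convexHull_min (iUnion₂_subset fun y _ => hCK y) hKconv) ⟨hKC hx.1, hx⟩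
  obtain ⟨y, hyt, hxy⟩ := mem_iUnion₂.1 hxC
  have hCV : C y ⊆ y +ᵥ (V + V) :=
    calc C y ⊆ closure (y +ᵥ V) := closure_mono (convexHull_min inter_subset_right (hVconv.vadd y))
      _ = y +ᵥ closure V := closure_vadd y V
      _ ⊆ y +ᵥ (V + V) := vadd_set_mono (closure_subset_add_self_of_mem_nhds_zero hV0)
  obtain ⟨w, hw, rfl⟩ := hCV hxy
  exact hxV y (htD y hyt) (by simpa using hw)

end Milman

section WeakDual

variable {F : Type*} [AddCommGroup F] [TopologicalSpace F] [Module 𝕜 F]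

instance : IsScalarTower ℝ 𝕜 (WeakDual 𝕜 F) := inferInstanceAs (IsScalarTower ℝ 𝕜 (F →L[𝕜] 𝕜))

instance : LocallyConvexSpace ℝ (WeakDual 𝕜 F) :=
  WeakBilin.locallyConvexSpace (B := topDualPairing 𝕜 F)

theorem WeakDual.convex_polar (s : Set F) : Convex ℝ (WeakDual.polar 𝕜 s) := by
  intro f hf g hg a b ha hb hab x hx
  calc ‖a • f x + b • g x‖ ≤ a * ‖f x‖ + b * ‖g x‖ := by
        simpa [norm_smul, abs_of_nonneg ha, abs_of_nonneg hb] using norm_add_le (a • f x) (b • g x)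
    _ ≤ a * 1 + b * 1 := by gcongr; exacts [hf x hx, hg x hx]
    _ = 1 := by rw [mul_one, mul_one, hab]

theorem WeakDual.mem_closure_convexHull_of_forall_re_le {C : Set (WeakDual 𝕜 F)}
    {h : WeakDual 𝕜 F}
    (hC : ∀ (S : F) (u : ℝ), (∀ a ∈ C, RCLike.re (a S) ≤ u) → RCLike.re (h S) ≤ u) :
    h ∈ closure (convexHull ℝ C) := by
  by_contra hh
  obtain ⟨f, u, hfC, hfh⟩ := RCLike.geometric_hahn_banach_closed_point (𝕜 := 𝕜)
    (convex_convexHull ℝ C).closure isClosed_closure hh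
  obtain ⟨S, rfl⟩ := LinearMap.dualEmbedding_surjective (topDualPairing 𝕜 F) f
  exact hfh.not_ge (hC S u fun a ha => (hfC a (subset_closure (subset_convexHull ℝ C ha))).le)

theorem StrongDual.toWeakDual_mem_extremePoints_image {s : Set (StrongDual 𝕜 F)}
    {g : StrongDual 𝕜 F} (hg : g ∈ s.extremePoints ℝ) :
    StrongDual.toWeakDual g ∈ (StrongDual.toWeakDual '' s).extremePoints ℝ :=
  image_extremePoints (toWeakDual (𝕜 := 𝕜) (E := F) |>.restrictScalars ℝ) s ▸ mem_image_of_mem _ hg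

end WeakDual

theorem RCLike.exists_norm_eq_one_mul_eq_norm (z : 𝕜) : ∃ θ : 𝕜, ‖θ‖ = 1 ∧ θ * z = ‖z‖ := by
  rcases eq_or_ne z 0 with rfl | hz
  · exact ⟨1, by simp, by simp⟩
  · exact ⟨‖z‖ / z, by simp [hz], by field_simp⟩

section NumericalRadius

theorem norm_apply_apply_le_opNorm {f : X →L[𝕜] 𝕜} {x : X} (hf : ‖f‖ = 1) (hx : ‖x‖ = 1)
    (T : X →L[𝕜] X) : ‖f (T x)‖ ≤ ‖T‖ := by
  simpa [hf, hx] using f.le_opNorm_of_le (T.le_opNorm x)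

theorem nrad_le {T : X →L[𝕜] X} {a : ℝ} (ha : 0 ≤ a)
    (h : ∀ (x : X) (f : X →L[𝕜] 𝕜), ‖x‖ = 1 → ‖f‖ = 1 → f x = 1 → ‖f (T x)‖ ≤ a) :
    nrad T ≤ a := by
  refine Real.sSup_le ?_ ha
  rintro r ⟨x, f, hx, hf, hfx, rfl⟩
  exact h x f hx hf hfx

theorem nrad_le_opNorm (T : X →L[𝕜] X) : nrad T ≤ ‖T‖ :=
  nrad_le (norm_nonneg T) fun _ _ hx hf _ => norm_apply_apply_le_opNorm hf hx T

theorem norm_apply_le_nrad {x : X} {f : X →L[𝕜] 𝕜} (hx : ‖x‖ = 1) (hf : ‖f‖ = 1) (hfx : f x = 1)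
    (T : X →L[𝕜] X) : ‖f (T x)‖ ≤ nrad T :=
  le_csSup ⟨‖T‖, by rintro r ⟨x, f, hx, hf, -, rfl⟩; exact norm_apply_apply_le_opNorm hf hx T⟩
    ⟨x, f, hx, hf, hfx, rfl⟩

theorem nrad_nonneg (T : X →L[𝕜] X) : 0 ≤ nrad T :=
  Real.sSup_nonneg <| by rintro r ⟨x, f, -, -, -, rfl⟩; positivity

theorem nrad_smul_le (c : 𝕜) (T : X →L[𝕜] X) : nrad (c • T) ≤ ‖c‖ * nrad T :=
  nrad_le (mul_nonneg (norm_nonneg c) (nrad_nonneg T)) fun x f hx hf hfx => by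
    simpa using mul_le_mul_of_nonneg_left (norm_apply_le_nrad hx hf hfx T) (norm_nonneg c)

/-- A norming pair `(f, x)` with `f x ≠ 0` rescales to the state `(‖x‖ / f x • f, x / ‖x‖)`. -/
theorem norm_apply_le_mul_nrad {f : X →L[𝕜] 𝕜} {x : X} (hfx : ‖f x‖ = ‖f‖ * ‖x‖)
    (T : X →L[𝕜] X) : ‖f (T x)‖ ≤ ‖f x‖ * nrad T := by
  rcases eq_or_ne (f x) 0 with h | h
  · rcases mul_eq_zero.1 (hfx.symm.trans (norm_eq_zero.2 h)) with hf | hx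
    · simp [norm_eq_zero.1 hf]
    · simp [norm_eq_zero.1 hx]
  have hx : ‖x‖ ≠ 0 := by rintro hx; simp [norm_eq_zero.1 hx] at h
  have hf : ‖f‖ ≠ 0 := by rintro hf; simp [norm_eq_zero.1 hf] at h
  have key := norm_apply_le_nrad (x := (‖x‖⁻¹ : 𝕜) • x) (f := ((‖x‖ : 𝕜) / f x) • f) ?_ ?_ ?_ T
  · simp only [map_smul, smul_apply, smul_eq_mul, norm_mul, norm_inv, RCLike.norm_ofReal,
      abs_norm, ← mul_assoc, div_eq_mul_inv] at key
    rwa [inv_mul_cancel₀ hx, one_mul, ← div_eq_inv_mul, div_le_iff₀ (norm_pos_iff.2 h),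
      mul_comm] at key
  · simp [norm_smul, hx]
  · rw [norm_smul, norm_div, RCLike.norm_ofReal, abs_norm, hfx]
    field_simp
  · simp only [map_smul, smul_apply, smul_eq_mul]
    field_simp
    exact div_self (RCLike.ofReal_ne_zero.2 hx)

end NumericalRadius

section

variable (𝕜 X)

def normingTensors : Set ((X →L[𝕜] X) →L[𝕜] 𝕜) :=
  {g | ∃ (f : X →L[𝕜] 𝕜) (x : X), ‖f‖ ≤ 1 ∧ ‖x‖ ≤ 1 ∧ ‖f x‖ = ‖f‖ * ‖x‖ ∧ g = tensor f x}

end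

theorem tensor_apply (f : X →L[𝕜] 𝕜) (x : X) (T : X →L[𝕜] X) : tensor f x T = f (T x) := rfl

theorem image_normingTensors_subset_polar :
    StrongDual.toWeakDual '' normingTensors 𝕜 X ⊆ WeakDual.polar 𝕜 {T | nrad T ≤ 1} := by
  rintro _ ⟨_, ⟨f, x, hf, hx, hfx, rfl⟩, rfl⟩ T hT
  calc ‖f (T x)‖ ≤ ‖f x‖ * nrad T := norm_apply_le_mul_nrad hfx T
    _ ≤ 1 := by
      rw [hfx]
      exact mul_le_one₀ (mul_le_one₀ hf (norm_nonneg x) hx) (nrad_nonneg T) hT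

theorem norm_apply_le_nrad_of_mem_polar {g : WeakDual 𝕜 (X →L[𝕜] X)}
    (hg : g ∈ WeakDual.polar 𝕜 {T | nrad T ≤ 1}) (S : X →L[𝕜] X) : ‖g S‖ ≤ nrad S := by
  refine le_of_forall_gt_imp_ge_of_dense fun r hr => ?_
  have hr0 : 0 < r := (nrad_nonneg S).trans_lt hr
  have hS : nrad ((r : 𝕜)⁻¹ • S) ≤ 1 := by
    refine (nrad_smul_le _ S).trans ?_
    rw [norm_inv, RCLike.norm_ofReal, abs_of_pos hr0, inv_mul_le_one₀ hr0]
    exact hr.le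
  have : ‖g ((r : 𝕜)⁻¹ • S)‖ ≤ 1 := hg _ hS
  rwa [map_smul, smul_eq_mul, norm_mul, norm_inv, RCLike.norm_ofReal, abs_of_pos hr0,
    inv_mul_le_one₀ hr0] at this

theorem nrad_le_of_forall_re_le {S : X →L[𝕜] X} {u : ℝ}
    (h : ∀ a ∈ normingTensors 𝕜 X, RCLike.re (a S) ≤ u) : nrad S ≤ u := by
  have hu : 0 ≤ u := by simpa [tensor_apply] using h _ ⟨0, 0, by simp, by simp, by simp, rfl⟩
  refine nrad_le hu fun x f hx hf hfx => ?_
  obtain ⟨θ, hθ, hθS⟩ := RCLike.exists_norm_eq_one_mul_eq_norm (f (S x))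
  have hθf : ‖θ • f‖ = 1 := by rw [norm_smul, hθ, hf, one_mul]
  simpa [tensor_apply, hθS] using
    h _ ⟨θ • f, x, hθf.le, hx.le, by simp [norm_smul, hθ, hfx, hf, hx], rfl⟩

theorem polar_subset_closure_convexHull_normingTensors :
    WeakDual.polar 𝕜 {T : X →L[𝕜] X | nrad T ≤ 1} ⊆
      closure (convexHull ℝ (StrongDual.toWeakDual '' normingTensors 𝕜 X)) := fun h hh =>
  WeakDual.mem_closure_convexHull_of_forall_re_le fun S u hu =>
    calc RCLike.re (h S) ≤ ‖h S‖ := RCLike.re_le_norm _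
      _ ≤ nrad S := norm_apply_le_nrad_of_mem_polar hh S
      _ ≤ u := nrad_le_of_forall_re_le fun a ha => hu _ ⟨a, ha, rfl⟩

theorem isCompact_polar_nrad_le_one :
    IsCompact (WeakDual.polar 𝕜 {T : X →L[𝕜] X | nrad T ≤ 1}) :=
  WeakDual.isCompact_polar 𝕜 <| mem_of_superset (Metric.closedBall_mem_nhds 0 one_pos)
    fun T hT => (nrad_le_opNorm T).trans (mem_closedBall_zero_iff.1 hT)

theorem wdual_le_one_iff {c : ℝ} (hc0 : 0 < c) (hc : ∀ T : X →L[𝕜] X, c * ‖T‖ ≤ nrad T)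
    (g : (X →L[𝕜] X) →L[𝕜] 𝕜) :
    wdual g ≤ 1 ↔ StrongDual.toWeakDual g ∈ WeakDual.polar 𝕜 {T | nrad T ≤ 1} := by
  have hbdd : BddAbove {r : ℝ | ∃ T : X →L[𝕜] X, nrad T ≤ 1 ∧ r = ‖g T‖} := by
    refine ⟨‖g‖ / c, ?_⟩
    rintro r ⟨T, hT, rfl⟩
    rw [le_div_iff₀ hc0, mul_comm]
    calc c * ‖g T‖ ≤ ‖g‖ * (c * ‖T‖) := by
          rw [mul_left_comm]; exact mul_le_mul_of_nonneg_left (g.le_opNorm T) hc0.le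
      _ ≤ ‖g‖ := mul_le_of_le_one_right (norm_nonneg g) ((hc T).trans hT)
  exact ⟨fun h T hT => (le_csSup hbdd ⟨T, hT, rfl⟩).trans h,
    fun h => Real.sSup_le (by rintro r ⟨T, hT, rfl⟩; exact h T hT) zero_le_one⟩

theorem stmt_4_general {X : Type*} [NormedAddCommGroup X] [NormedSpace 𝕜 X]
    (hc : ∃ c > (0 : ℝ), ∀ T : X →L[𝕜] X, c * ‖T‖ ≤ nrad T) :
    ∀ g ∈ Set.extremePoints ℝ {g : (X →L[𝕜] X) →L[𝕜] 𝕜 | wdual g ≤ 1},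
      StrongDual.toWeakDual g ∈ closure (StrongDual.toWeakDual ''
        {g : (X →L[𝕜] X) →L[𝕜] 𝕜 | ∃ (f : X →L[𝕜] 𝕜) (x : X),
          ‖f‖ ≤ 1 ∧ ‖x‖ ≤ 1 ∧ ‖f x‖ = ‖f‖ * ‖x‖ ∧ g = tensor f x}) := by
  obtain ⟨c, hc0, hc⟩ := hc
  intro g hg
  have hball : StrongDual.toWeakDual '' {g : (X →L[𝕜] X) →L[𝕜] 𝕜 | wdual g ≤ 1} =
      WeakDual.polar 𝕜 {T | nrad T ≤ 1} := by
    ext h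
    exact ⟨by rintro ⟨g, hg, rfl⟩; exact (wdual_le_one_iff hc0 hc g).1 hg,
      fun hh => ⟨WeakDual.toStrongDual h, (wdual_le_one_iff hc0 hc _).2 hh, rfl⟩⟩
  have hext : StrongDual.toWeakDual g ∈ (WeakDual.polar 𝕜 {T | nrad T ≤ 1}).extremePoints ℝ :=
    hball ▸ StrongDual.toWeakDual_mem_extremePoints_image hg
  -- elaborating the hypotheses only after the instance arguments are synthesized avoids a costly
  -- unification of the instances on `WeakDual`
  refine mem_closure_of_mem_extremePoints (K := WeakDual.polar 𝕜 {T | nrad T ≤ 1}) ?_ ?_ ?_ ?_ ?_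
  exacts [isCompact_polar_nrad_le_one, WeakDual.convex_polar _, image_normingTensors_subset_polar,
    polar_subset_closure_convexHull_normingTensors, hext]

/-- Every extreme point of the closed unit ball of `(L(X)_w)*` lies in the weak* closure of
`A = {x*⊗x : ‖x*‖≤1, ‖x‖≤1, |x*(x)| = ‖x*‖‖x‖}`. -/
theorem stmt_4 {X : Type*} [NormedAddCommGroup X] [NormedSpace 𝕜 X] [CompleteSpace X]
    (hw : ∀ T : X →L[𝕜] X, nrad T = 0 → T = 0)
    (hc : ∃ c > (0 : ℝ), ∀ T : X →L[𝕜] X, c * ‖T‖ ≤ nrad T) :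
    ∀ g ∈ Set.extremePoints ℝ {g : (X →L[𝕜] X) →L[𝕜] 𝕜 | wdual g ≤ 1},
      StrongDual.toWeakDual g ∈ closure (StrongDual.toWeakDual ''
        {g : (X →L[𝕜] X) →L[𝕜] 𝕜 | ∃ (f : X →L[𝕜] 𝕜) (x : X),
          ‖f‖ ≤ 1 ∧ ‖x‖ ≤ 1 ∧ ‖f x‖ = ‖f‖ * ‖x‖ ∧ g = tensor f x}) :=
  stmt_4_general hc
end

section
/- Let H be a finite-dimensional complex Hilbert space, T ∈ L(H) nonzero, and V a subspace of L(H). If there exist t₁,…,t_h > 0 with Σ tᵢ = 1 and unit vectors x₁,…,x_h ∈ H with |⟨T xᵢ, xᵢ⟩| = w(T) for each i, such that Σᵢ tᵢ · conj(⟨T xᵢ, xᵢ⟩) · ⟨S xᵢ, xᵢ⟩ = 0 for every S ∈ V, then w(T + λS) ≥ w(T) for every scalar λ and every S ∈ V. -/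
/-! Put `aᵢ = ⟪T xᵢ, xᵢ⟫` and `bᵢ = ⟪(T + c • S) xᵢ, xᵢ⟫ = aᵢ + ⟪(c • S) xᵢ, xᵢ⟫`. Since `|aᵢ| = w(T)`
and `c • S ∈ V`, the orthogonality condition gives `w(T)² = ∑ tᵢ conj(aᵢ) bᵢ`; as `|bᵢ| ≤ w(T + c • S)`,
this yields `w(T)² ≤ w(T) · w(T + c • S)`. -/

open scoped InnerProductSpace

/-- The numerical radius of an operator on a complex Hilbert space. -/
noncomputable def nradH {H : Type*} [NormedAddCommGroup H] [InnerProductSpace ℂ H]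
    (T : H →L[ℂ] H) : ℝ :=
  sSup {r : ℝ | ∃ x : H, ‖x‖ = 1 ∧ r = ‖(⟪T x, x⟫_ℂ)‖}

open ComplexConjugate in
theorem sq_le_mul_of_sum_conj_mul_eq_zero {ι : Type*} [Fintype ι] {t : ι → ℝ}
    (ht : ∀ i, 0 ≤ t i) (hts : ∑ i, t i = 1) {a s : ι → ℂ} {w W : ℝ}
    (ha : ∀ i, ‖a i‖ = w) (hb : ∀ i, ‖a i + s i‖ ≤ W)
    (horth : ∑ i, (t i : ℂ) * conj (a i) * s i = 0) :
    w ^ 2 ≤ w * W := by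
  have hsum : ∑ i, (t i : ℂ) * conj (a i) * (a i + s i) = ((w ^ 2 : ℝ) : ℂ) := by
    rw [Finset.sum_congr rfl fun i _ => mul_add _ _ _, Finset.sum_add_distrib, horth, add_zero]
    simp only [mul_assoc, Complex.conj_mul', ha, ← Finset.sum_mul]
    exact_mod_cast by rw [hts, one_mul]
  calc w ^ 2 = ‖∑ i, (t i : ℂ) * conj (a i) * (a i + s i)‖ := by
        rw [hsum, Complex.norm_real, Real.norm_of_nonneg (sq_nonneg w)]
    _ ≤ ∑ i, ‖(t i : ℂ) * conj (a i) * (a i + s i)‖ := norm_sum_le _ _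
    _ ≤ ∑ i, t i * (w * W) := by
        refine Finset.sum_le_sum fun i _ => ?_
        rw [norm_mul, norm_mul, Complex.norm_real, Real.norm_of_nonneg (ht i), Complex.norm_conj,
          ha i, mul_assoc]
        exact mul_le_mul_of_nonneg_left
          (mul_le_mul_of_nonneg_left (hb i) ((ha i) ▸ norm_nonneg _)) (ht i)
    _ = w * W := by rw [← Finset.sum_mul, hts, one_mul]

section NumericalRadius

variable {H : Type*} [NormedAddCommGroup H] [InnerProductSpace ℂ H]

theorem nradH_nonneg (T : H →L[ℂ] H) : 0 ≤ nradH T :=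
  Real.sSup_nonneg fun _ ⟨_, _, hr⟩ => hr ▸ norm_nonneg _

theorem norm_inner_self_le_nradH (T : H →L[ℂ] H) {x : H} (hx : ‖x‖ = 1) :
    ‖⟪T x, x⟫_ℂ‖ ≤ nradH T := by
  refine le_csSup ⟨‖T‖, ?_⟩ ⟨x, hx, rfl⟩
  rintro r ⟨y, hy, rfl⟩
  calc ‖⟪T y, y⟫_ℂ‖ ≤ ‖T y‖ * ‖y‖ := norm_inner_le_norm _ _
    _ ≤ ‖T‖ * ‖y‖ * ‖y‖ := by gcongr; exact T.le_opNorm y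
    _ = ‖T‖ := by rw [hy, mul_one, mul_one]

end NumericalRadius

theorem stmt_11_general {H : Type*} [NormedAddCommGroup H] [InnerProductSpace ℂ H]
    (T : H →L[ℂ] H) (V : Submodule ℂ (H →L[ℂ] H))
    (h : ℕ) (t : Fin h → ℝ) (ht : ∀ i, 0 < t i) (hts : ∑ i, t i = 1)
    (x : Fin h → H) (hx : ∀ i, ‖x i‖ = 1)
    (hatt : ∀ i, ‖(⟪T (x i), x i⟫_ℂ)‖ = nradH T)
    (hsum : ∀ S ∈ V, ∑ i, (t i : ℂ) * (starRingEnd ℂ ⟪T (x i), x i⟫_ℂ) * ⟪S (x i), x i⟫_ℂ = 0) :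
    ∀ S ∈ V, ∀ c : ℂ, nradH T ≤ nradH (T + c • S) := by
  intro S hS c
  have hsq : nradH T ^ 2 ≤ nradH T * nradH (T + c • S) := by
    refine sq_le_mul_of_sum_conj_mul_eq_zero (fun i => (ht i).le) hts hatt (fun i => ?_)
      (hsum _ (V.smul_mem c hS))
    rw [← inner_add_left, ← add_apply]
    exact norm_inner_self_le_nradH _ (hx i)
  nlinarith [nradH_nonneg T, nradH_nonneg (T + c • S)]

theorem stmt_11 {H : Type*} [NormedAddCommGroup H] [InnerProductSpace ℂ H]
    [FiniteDimensional ℂ H]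
    (T : H →L[ℂ] H) (hT : T ≠ 0) (V : Submodule ℂ (H →L[ℂ] H))
    (h : ℕ) (hh : 0 < h) (t : Fin h → ℝ) (ht : ∀ i, 0 < t i) (hts : ∑ i, t i = 1)
    (x : Fin h → H) (hx : ∀ i, ‖x i‖ = 1)
    (hatt : ∀ i, ‖(⟪T (x i), x i⟫_ℂ)‖ = nradH T)
    (hsum : ∀ S ∈ V, ∑ i, (t i : ℂ) * (starRingEnd ℂ ⟪T (x i), x i⟫_ℂ) * ⟪S (x i), x i⟫_ℂ = 0) :
    ∀ S ∈ V, ∀ c : ℂ, nradH T ≤ nradH (T + c • S) :=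
  stmt_11_general T V h t ht hts x hx hatt hsum
end
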